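/- ∫_{-1}^{1} ((1 + x)/(2x)) · arctan x dx = G, where G is Catalan's constant. -/

import Mathlib

/-!
Since `arctan` is odd, the integrand `f x = (1 + x) / (2 x) · arctan x` satisfies
`f x + f (-x) = arctan x / x`, so folding `[-1, 0]` onto `[0, 1]` gives
`∫_{-1}^{1} f = ∫_0^1 arctan x / x`. Dividing the Taylor series of `arctan` by `x` and
integrating term by term (the series of integrals of absolute values is `∑ 1/(2n+1)²`)
yields `∑ (-1)ⁿ / (2n+1)²`.
-/

open MeasureTheory Set Real

namespace Real

lemma arctan_le_self {x : ℝ} (hx : 0 ≤ x) : arctan x ≤ x := by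
  simpa only [tan_arctan] using le_tan (arctan_nonneg.2 hx) (arctan_lt_pi_div_two x)

lemma abs_arctan_le_abs (x : ℝ) : |arctan x| ≤ |x| := by
  have key : ∀ y : ℝ, 0 ≤ y → |arctan y| ≤ |y| := fun y hy => by
    rw [abs_of_nonneg (arctan_nonneg.2 hy), abs_of_nonneg hy]
    exact arctan_le_self hy
  rcases le_total 0 x with hx | hx
  · exact key x hx
  · simpa only [arctan_neg, abs_neg] using key (-x) (neg_nonneg.2 hx)

lemma hasSum_arctan_div_self {x : ℝ} (hx₀ : x ≠ 0) (hx : ‖x‖ < 1) :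
    HasSum (fun n : ℕ => (-1) ^ n * x ^ (2 * n) / (2 * n + 1)) (arctan x / x) :=
  ((hasSum_arctan hx).div_const x).congr_fun fun n => by
    push_cast
    field_simp
    ring

end Real

namespace intervalIntegral

variable {E : Type*} [NormedAddCommGroup E] [NormedSpace ℝ E]

theorem integral_symm_eq_integral_add_comp_neg {f : ℝ → E} {a : ℝ}
    (hf : IntervalIntegrable f volume (-a) a) :
    ∫ x in -a..a, f x = ∫ x in 0..a, (f x + f (-x)) := by
  have h0 : (0 : ℝ) ∈ uIcc (-a) a := by simpa [mem_uIcc] using le_total 0 a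
  have hleft : IntervalIntegrable f volume (-a) 0 := hf.mono_set (uIcc_subset_uIcc_left h0)
  have hright : IntervalIntegrable f volume 0 a := hf.mono_set (uIcc_subset_uIcc_right h0)
  have hleft_neg : IntervalIntegrable (fun x => f (-x)) volume 0 a := by
    simpa using (IntervalIntegrable.iff_comp_neg (f := f)).1 hleft.symm
  rw [integral_add hright hleft_neg, integral_comp_neg, neg_zero, add_comm,
    integral_add_adjacent_intervals hleft hright]

end intervalIntegral

lemma integral_Ioo_mul_pow_div (c : ℝ) (n : ℕ) :
    ∫ x in Ioo (0 : ℝ) 1, c * x ^ (2 * n) / (2 * n + 1) = c / (2 * n + 1) ^ 2 := by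
  rw [← integral_Ioc_eq_integral_Ioo, ← intervalIntegral.integral_of_le zero_le_one,
    intervalIntegral.integral_div, intervalIntegral.integral_const_mul, integral_pow]
  push_cast
  field_simp
  ring

lemma summable_one_div_two_mul_add_one_sq :
    Summable (fun n : ℕ => 1 / (2 * (n : ℝ) + 1) ^ 2) := by
  have := (Real.summable_one_div_nat_pow.2 one_lt_two).comp_injective
    (i := fun n : ℕ => 2 * n + 1) (fun a b h => by simp only at h; omega)
  simpa [Function.comp_def] using this

theorem integral_arctan_div_self :
    ∫ x in (0 : ℝ)..1, arctan x / x = ∑' n : ℕ, (-1 : ℝ) ^ n / (2 * n + 1) ^ 2 := by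
  set F : ℕ → ℝ → ℝ := fun n x => (-1) ^ n * x ^ (2 * n) / (2 * n + 1)
  have hF_int (n : ℕ) : IntegrableOn (F n) (Ioo 0 1) :=
    (by fun_prop : Continuous (F n)).integrableOn_Icc.mono_set Ioo_subset_Icc_self
  have hF_norm (n : ℕ) : ∫ x in Ioo (0 : ℝ) 1, ‖F n x‖ = 1 / (2 * n + 1) ^ 2 := by
    rw [← integral_Ioo_mul_pow_div 1 n]
    congr 1 with x
    simp only [F, norm_div, norm_mul, norm_pow, norm_neg, norm_one, one_pow, one_mul,
      Real.norm_eq_abs, pow_mul, sq_abs]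
    rw [abs_of_pos (by positivity)]
  have hseries : EqOn (fun x => arctan x / x) (fun x => ∑' n, F n x) (Ioo 0 1) :=
    fun x hx => ((hasSum_arctan_div_self hx.1.ne'
      (by rw [norm_eq_abs, abs_of_pos hx.1]; exact hx.2)).tsum_eq).symm
  rw [intervalIntegral.integral_of_le zero_le_one, integral_Ioc_eq_integral_Ioo,
    setIntegral_congr_fun measurableSet_Ioo hseries,
    ← integral_tsum_of_summable_integral_norm hF_int
      (by simpa only [hF_norm] using summable_one_div_two_mul_add_one_sq)]
  exact tsum_congr fun n => integral_Ioo_mul_pow_div _ n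

lemma abs_one_add_div_two_mul_mul_arctan_le_one {x : ℝ} (hx : x ∈ Icc (-1) 1) :
    |(1 + x) / (2 * x) * arctan x| ≤ 1 :=
  calc |(1 + x) / (2 * x) * arctan x| = |1 + x| / 2 * (|arctan x| / |x|) := by
        rw [abs_mul, abs_div, abs_mul, abs_two]; ring
    _ ≤ 1 * 1 := by
        gcongr
        · rw [div_le_one two_pos, abs_le]; constructor <;> linarith [hx.1, hx.2]
        · exact div_le_one_of_le₀ (abs_arctan_le_abs x) (abs_nonneg x)
    _ = 1 := one_mul 1

theorem catalan_linear_weight :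
    ∫ x in (-1:ℝ)..1, (1 + x) / (2 * x) * Real.arctan x
      = ∑' n : ℕ, (-1 : ℝ)^n / (2 * n + 1)^2 := by
  have hint : IntervalIntegrable (fun x => (1 + x) / (2 * x) * arctan x) volume (-1) 1 := by
    rw [intervalIntegrable_iff_integrableOn_Icc_of_le (by norm_num)]
    refine Measure.integrableOn_of_bounded (M := 1) measure_Icc_lt_top.ne
      (by fun_prop) ((ae_restrict_iff' measurableSet_Icc).2
        (ae_of_all _ fun _ => abs_one_add_div_two_mul_mul_arctan_le_one))
  -- no `x ≠ 0` needed: with `x / 0 = 0` both sides vanish at `0`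
  have hfold (x : ℝ) :
      (1 + x) / (2 * x) * arctan x + (1 + -x) / (2 * -x) * arctan (-x) = arctan x / x := by
    rw [arctan_neg]; ring
  rw [intervalIntegral.integral_symm_eq_integral_add_comp_neg hint]
  simp only [hfold]
  exact integral_arctan_div_self
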